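/- arXiv:1907.08865 — 2 statements merged into one kernel-verified Lean document; each statement's English description precedes it below -/
import Mathlib

section
/- A vertex-colored graph $(G,\sigma)$ is a 2-hc-cograph (an hc-cograph using exactly two colors) if and only if $(G,\sigma)$ is a properly 2-colored bicluster graph that contains at least one edge. -/
/-!
An hc-cograph is a cograph, hence P₄-free, so each of its connected components has diameter at
most two. Under a proper colouring with two colours, two vertices of one component are then
adjacent exactly when their colours differ, i.e. every component is a biclique.

Conversely, each component of a properly 2-coloured bicluster graph is a single vertex or the
join of its two sides, which are monochromatic independent sets of different colours. A component
containing an edge uses both colours, so all other components can be attached to it one at a time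
by disjoint unions whose colour sets are comparable.
-/

namespace RBMGPaper

variable {V : Type*} {C : Type*}

/-- `HCOn G σ A` asserts that the subgraph of the vertex-colored graph `(G, σ)` induced on the
vertex set `A` is a hierarchically colored cograph, built recursively via (K1)–(K3). -/
inductive HCOn (G : SimpleGraph V) (σ : V → C) : Set V → Prop
  | single (v : V) : HCOn G σ {v}
  | join (A B : Set V) (hA : A.Nonempty) (hB : B.Nonempty) (hdisj : Disjoint A B)
      (hadj : ∀ a ∈ A, ∀ b ∈ B, G.Adj a b)
      (hcol : Disjoint (σ '' A) (σ '' B))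
      (h1 : HCOn G σ A) (h2 : HCOn G σ B) : HCOn G σ (A ∪ B)
  | union (A B : Set V) (hA : A.Nonempty) (hB : B.Nonempty) (hdisj : Disjoint A B)
      (hadj : ∀ a ∈ A, ∀ b ∈ B, ¬ G.Adj a b)
      (hcol : σ '' A ⊆ σ '' B ∨ σ '' B ⊆ σ '' A)
      (h1 : HCOn G σ A) (h2 : HCOn G σ B) : HCOn G σ (A ∪ B)

/-- `(G, σ)` is a hierarchically colored cograph (hc-cograph). -/
def IsHCCograph (G : SimpleGraph V) (σ : V → C) : Prop :=
  HCOn G σ Set.univ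

/-- `CographOn G A` asserts that the subgraph of `G` induced on `A` is a cograph. -/
inductive CographOn (G : SimpleGraph V) : Set V → Prop
  | single (v : V) : CographOn G {v}
  | union (A B : Set V) (hA : A.Nonempty) (hB : B.Nonempty) (hdisj : Disjoint A B)
      (hadj : ∀ a ∈ A, ∀ b ∈ B, ¬ G.Adj a b)
      (h1 : CographOn G A) (h2 : CographOn G B) : CographOn G (A ∪ B)
  | join (A B : Set V) (hA : A.Nonempty) (hB : B.Nonempty) (hdisj : Disjoint A B)
      (hadj : ∀ a ∈ A, ∀ b ∈ B, G.Adj a b)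
      (h1 : CographOn G A) (h2 : CographOn G B) : CographOn G (A ∪ B)

/-- `G` is a cograph. -/
def IsCograph (G : SimpleGraph V) : Prop := CographOn G Set.univ

/-- The set `s` induces a biclique (complete bipartite graph, possibly `K₁`) in `G`. -/
def IsBiclique (G : SimpleGraph V) (s : Set V) : Prop :=
  ∃ A B : Set V, s = A ∪ B ∧ Disjoint A B ∧
    ∀ u ∈ s, ∀ v ∈ s, (G.Adj u v ↔ ((u ∈ A ∧ v ∈ B) ∨ (u ∈ B ∧ v ∈ A)))

/-- `G` is a bicluster graph: every connected component is a biclique. -/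
def IsBiclusterGraph (G : SimpleGraph V) : Prop :=
  ∀ c : G.ConnectedComponent, IsBiclique G c.supp

/-- `addHub G` is the graph `G + x`: a new vertex (`none`) adjacent to all vertices of `G`. -/
def addHub (G : SimpleGraph V) : SimpleGraph (Option V) where
  Adj u v :=
    (∃ a b, u = some a ∧ v = some b ∧ G.Adj a b) ∨
    (u = none ∧ ∃ b, v = some b) ∨ ((∃ a, u = some a) ∧ v = none)
  symm := by
    constructor
    rintro u v (⟨a, b, rfl, rfl, h⟩ | ⟨rfl, b, rfl⟩ | ⟨⟨a, rfl⟩, rfl⟩)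
    · exact Or.inl ⟨b, a, rfl, rfl, h.symm⟩
    · exact Or.inr (Or.inr ⟨⟨b, rfl⟩, rfl⟩)
    · exact Or.inr (Or.inl ⟨rfl, a, rfl⟩)
  loopless := by
    constructor
    rintro u (⟨a, b, rfl, hb, h⟩ | ⟨rfl, b, hb⟩ | ⟨⟨a, rfl⟩, hb⟩)
    · exact G.irrefl (Option.some_injective V hb ▸ h)
    · exact absurd hb (by simp)
    · exact absurd hb (by simp)

open SimpleGraph (ConnectedComponent)

variable {G : SimpleGraph V} {σ : V → C} {S : Set V}

theorem color_eq_of_ne_of_ne (h2 : (Set.range σ).ncard = 2) {u v w : V}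
    (huw : σ u ≠ σ w) (hvw : σ v ≠ σ w) : σ u = σ v := by
  obtain ⟨x, y, -, hxy⟩ := Set.ncard_eq_two.mp h2
  have hσ (v : V) : σ v ∈ ({x, y} : Set C) := hxy ▸ Set.mem_range_self v
  simp only [Set.mem_insert_iff, Set.mem_singleton_iff] at hσ
  grind

theorem image_eq_range_of_ne (h2 : (Set.range σ).ncard = 2) {a b : V}
    (ha : a ∈ S) (hb : b ∈ S) (hab : σ a ≠ σ b) : σ '' S = Set.range σ := by
  have hfin : (Set.range σ).Finite := Set.finite_of_ncard_ne_zero (by omega)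
  refine Set.eq_of_subset_of_ncard_le (Set.image_subset_range σ S) ?_ hfin
  calc (Set.range σ).ncard = ({σ a, σ b} : Set C).ncard := by rw [h2, Set.ncard_pair hab]
    _ ≤ (σ '' S).ncard :=
      Set.ncard_le_ncard
        (Set.insert_subset ⟨a, ha, rfl⟩ (Set.singleton_subset_iff.mpr ⟨b, hb, rfl⟩))
        (hfin.subset (Set.image_subset_range σ S))

theorem HCOn.cographOn (h : HCOn G σ S) : CographOn G S := by
  induction h with
  | single v => exact .single v
  | join A B hA hB hdisj hadj _ _ _ ih₁ ih₂ => exact .join A B hA hB hdisj hadj ih₁ ih₂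
  | union A B hA hB hdisj hadj _ _ _ ih₁ ih₂ => exact .union A B hA hB hdisj hadj ih₁ ih₂

/-- Cographs are P₄-free: every path `a b c d` has a chord. -/
theorem CographOn.adj_or_adj_or_adj (h : CographOn G S) {a b c d : V} (ha : a ∈ S)
    (hb : b ∈ S) (hc : c ∈ S) (hd : d ∈ S) (hab : G.Adj a b) (hbc : G.Adj b c)
    (hcd : G.Adj c d) : G.Adj a c ∨ G.Adj b d ∨ G.Adj a d := by
  induction h with
  | single v => simp_all
  | union A B _ _ _ hadj _ _ ih₁ ih₂ =>
    have stayA : ∀ {u v}, u ∈ A → v ∈ A ∪ B → G.Adj u v → v ∈ A :=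
      fun hu hv huv => hv.resolve_right fun hv => hadj _ hu _ hv huv
    have stayB : ∀ {u v}, u ∈ B → v ∈ A ∪ B → G.Adj u v → v ∈ B :=
      fun hu hv huv => hv.resolve_left fun hv => hadj _ hv _ hu huv.symm
    rcases ha with ha | ha
    · have hb := stayA ha hb hab
      have hc := stayA hb hc hbc
      exact ih₁ ha hb hc (stayA hc hd hcd)
    · have hb := stayB ha hb hab
      have hc := stayB hb hc hbc
      exact ih₂ ha hb hc (stayB hc hd hcd)
  | join A B _ _ _ hadj _ _ ih₁ ih₂ =>
    rcases ha with ha | ha <;> rcases hb with hb | hb <;> rcases hc with hc | hc <;>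
      rcases hd with hd | hd <;> grind [SimpleGraph.Adj.symm]

theorem HCOn.ne_of_adj (h : HCOn G σ S) {u v : V} (hu : u ∈ S) (hv : v ∈ S)
    (huv : G.Adj u v) : σ u ≠ σ v := by
  induction h with
  | single w => exact absurd huv (by simp_all)
  | join A B _ _ _ _ hcol _ _ ih₁ ih₂ =>
    rcases hu with hu | hu <;> rcases hv with hv | hv
    · exact ih₁ hu hv
    · exact fun he => Set.disjoint_left.mp hcol ⟨u, hu, rfl⟩ ⟨v, hv, he.symm⟩
    · exact fun he => Set.disjoint_left.mp hcol ⟨v, hv, rfl⟩ ⟨u, hu, he⟩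
    · exact ih₂ hu hv
  | union A B _ _ _ hadj _ _ _ ih₁ ih₂ =>
    rcases hu with hu | hu <;> rcases hv with hv | hv
    · exact ih₁ hu hv
    · exact absurd huv (hadj u hu v hv)
    · exact absurd huv.symm (hadj v hv u hu)
    · exact ih₂ hu hv

theorem HCOn.exists_adj_of_nontrivial (h : HCOn G σ S) (hS : (σ '' S).Nontrivial) :
    ∃ a ∈ S, ∃ b ∈ S, G.Adj a b := by
  induction h with
  | single v => simp at hS
  | join A B hA hB _ hadj _ _ _ _ _ =>
    obtain ⟨a, ha⟩ := hA
    obtain ⟨b, hb⟩ := hB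
    exact ⟨a, .inl ha, b, .inr hb, hadj a ha b hb⟩
  | union A B _ _ _ _ hcol _ _ ih₁ ih₂ =>
    rw [Set.image_union] at hS
    rcases hcol with hAB | hBA
    · obtain ⟨a, ha, b, hb, hab⟩ := ih₂ (by rwa [Set.union_eq_right.mpr hAB] at hS)
      exact ⟨a, .inr ha, b, .inr hb, hab⟩
    · obtain ⟨a, ha, b, hb, hab⟩ := ih₁ (by rwa [Set.union_eq_left.mpr hBA] at hS)
      exact ⟨a, .inl ha, b, .inl hb, hab⟩

theorem eq_or_adj_or_exists_adj_adj_of_walk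
    (hP4 : ∀ {a b c d}, G.Adj a b → G.Adj b c → G.Adj c d → G.Adj a c ∨ G.Adj b d ∨ G.Adj a d)
    {u v : V} (p : G.Walk u v) : u = v ∨ G.Adj u v ∨ ∃ w, G.Adj u w ∧ G.Adj w v := by
  induction p with
  | nil => exact .inl rfl
  | cons hab _ ih =>
    rcases ih with rfl | hbc | ⟨w, hbw, hwc⟩
    · exact .inr (.inl hab)
    · exact .inr (.inr ⟨_, hab, hbc⟩)
    · rcases hP4 hab hbw hwc with haw | hbc | hac
      · exact .inr (.inr ⟨w, haw, hwc⟩)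
      · exact .inr (.inr ⟨_, hab, hbc⟩)
      · exact .inr (.inl hac)

theorem isBiclusterGraph_of_adj_iff (p : V → Prop)
    (h : ∀ u v, G.Reachable u v → (G.Adj u v ↔ ¬(p u ↔ p v))) : IsBiclusterGraph G := by
  intro c
  refine ⟨c.supp ∩ {v | p v}, c.supp \ {v | p v}, (Set.inter_union_sdiff _ _).symm,
    Set.disjoint_sdiff_inter.symm, fun u hu v hv => ?_⟩
  rw [h u v (ConnectedComponent.exact (hu.trans hv.symm))]
  simp only [Set.mem_inter_iff, Set.mem_sdiff, Set.mem_ofPred_eq, hu, hv, true_and]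
  tauto

theorem IsHCCograph.isBiclusterGraph (h : IsHCCograph G σ) (h2 : (Set.range σ).ncard = 2) :
    IsBiclusterGraph G := by
  obtain ⟨x, y, -, hxy⟩ := Set.ncard_eq_two.mp h2
  obtain ⟨v₀, rfl⟩ : x ∈ Set.range σ := hxy ▸ Set.mem_insert x {y}
  have hproper {u v : V} : G.Adj u v → σ u ≠ σ v := HCOn.ne_of_adj h trivial trivial
  refine isBiclusterGraph_of_adj_iff (σ · = σ v₀) fun u v ⟨p⟩ =>
    ⟨fun huv hiff => ?_, fun hne => ?_⟩
  · by_cases hu : σ u = σ v₀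
    · exact hproper huv (hu.trans (hiff.mp hu).symm)
    · exact hproper huv (color_eq_of_ne_of_ne h2 hu (mt hiff.mpr hu))
  · have hP4 {a b c d : V} : G.Adj a b → G.Adj b c → G.Adj c d →
        G.Adj a c ∨ G.Adj b d ∨ G.Adj a d :=
      (HCOn.cographOn h).adj_or_adj_or_adj trivial trivial trivial trivial
    rcases eq_or_adj_or_exists_adj_adj_of_walk hP4 p with rfl | huv | ⟨w, huw, hwv⟩
    · exact absurd Iff.rfl hne
    · exact huv
    · have huv := color_eq_of_ne_of_ne h2 (hproper huw) (hproper hwv).symm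
      exact (hne (by rw [huv])).elim

theorem hcOn_of_isIndepSet {x : C} (hfin : S.Finite) (hne : S.Nonempty)
    (hind : G.IsIndepSet S) (hσ : ∀ v ∈ S, σ v = x) : HCOn G σ S := by
  lift S to Finset V using hfin
  induction hne using Finset.Nonempty.cons_induction with
  | singleton a => simpa using HCOn.single a
  | cons a s ha hs ih =>
    simp only [Finset.coe_cons, Set.insert_eq] at hind hσ ⊢
    have hσs : σ '' s ⊆ σ '' {a} := by
      rintro _ ⟨v, hv, rfl⟩
      simp [hσ v (.inr hv), hσ a (.inl rfl)]
    have hadj : ∀ u ∈ ({a} : Set V), ∀ v ∈ (s : Set V), ¬G.Adj u v := by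
      rintro _ rfl v hv
      exact hind (.inl rfl) (.inr hv) (fun hav => ha (hav ▸ hv))
    exact .union {a} s (Set.singleton_nonempty a) hs (by simpa using ha) hadj (.inr hσs)
      (.single a) (ih (hind.mono Set.subset_union_right) fun v hv => hσ v (.inr hv))

theorem hcOn_union_of_forall_adj (h2 : (Set.range σ).ncard = 2)
    (hproper : ∀ u v, G.Adj u v → σ u ≠ σ v) {A B : Set V} (hAfin : A.Finite) (hBfin : B.Finite)
    (hA : A.Nonempty) (hB : B.Nonempty) (hAind : G.IsIndepSet A) (hBind : G.IsIndepSet B)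
    (hadj : ∀ a ∈ A, ∀ b ∈ B, G.Adj a b) : HCOn G σ (A ∪ B) := by
  obtain ⟨a, ha⟩ := hA
  obtain ⟨b, hb⟩ := hB
  have hσA (u : V) (hu : u ∈ A) : σ u = σ a :=
    color_eq_of_ne_of_ne h2 (hproper _ _ (hadj u hu b hb)) (hproper _ _ (hadj a ha b hb))
  have hσB (v : V) (hv : v ∈ B) : σ v = σ b :=
    color_eq_of_ne_of_ne h2 (hproper _ _ (hadj a ha v hv)).symm
      (hproper _ _ (hadj a ha b hb)).symm
  have hdisj : Disjoint A B :=
    Set.disjoint_left.mpr fun u huA huB => G.irrefl (hadj u huA u huB)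
  refine .join A B ⟨a, ha⟩ ⟨b, hb⟩ hdisj hadj ?_ (hcOn_of_isIndepSet hAfin ⟨a, ha⟩ hAind hσA)
    (hcOn_of_isIndepSet hBfin ⟨b, hb⟩ hBind hσB)
  rw [Set.disjoint_left]
  rintro _ ⟨u, hu, rfl⟩ ⟨v, hv, hvu⟩
  exact hproper a b (hadj a ha b hb) (by rw [← hσA u hu, ← hσB v hv, hvu])

theorem IsBiclique.hcOn (h2 : (Set.range σ).ncard = 2) (hproper : ∀ u v, G.Adj u v → σ u ≠ σ v)
    {s : Set V} (hs : IsBiclique G s) (hfin : s.Finite) {v w : V} (hv : v ∈ s) (hw : w ∈ s)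
    (hvw : G.Adj v w) : HCOn G σ s := by
  obtain ⟨A, B, rfl, hdisj, hiff⟩ := hs
  have hAind : G.IsIndepSet A := fun u hu u' hu' _ huu' => by
    rcases (hiff u (.inl hu) u' (.inl hu')).mp huu' with ⟨-, h⟩ | ⟨h, -⟩
    · exact Set.disjoint_left.mp hdisj hu' h
    · exact Set.disjoint_left.mp hdisj hu h
  have hBind : G.IsIndepSet B := fun u hu u' hu' _ huu' => by
    rcases (hiff u (.inr hu) u' (.inr hu')).mp huu' with ⟨h, -⟩ | ⟨-, h⟩
    · exact Set.disjoint_left.mp hdisj h hu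
    · exact Set.disjoint_left.mp hdisj h hu'
  have hAB (a : V) (ha : a ∈ A) (b : V) (hb : b ∈ B) : G.Adj a b :=
    (hiff a (.inl ha) b (.inr hb)).mpr (.inl ⟨ha, hb⟩)
  have hAfin := hfin.subset Set.subset_union_left
  have hBfin := hfin.subset Set.subset_union_right
  rcases (hiff v hv w hw).mp hvw with ⟨hvA, hwB⟩ | ⟨hvB, hwA⟩
  · exact hcOn_union_of_forall_adj h2 hproper hAfin hBfin ⟨v, hvA⟩ ⟨w, hwB⟩ hAind hBind hAB
  · rw [Set.union_comm]
    exact hcOn_union_of_forall_adj h2 hproper hBfin hAfin ⟨v, hvB⟩ ⟨w, hwA⟩ hBind hAind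
      fun b hb a ha => (hAB a ha b hb).symm

theorem supp_connectedComponentMk_eq_singleton {v : V} (hv : ∀ w, ¬G.Adj v w) :
    (G.connectedComponentMk v).supp = {v} := by
  ext u
  simp only [ConnectedComponent.mem_supp_iff, Set.mem_singleton_iff]
  refine ⟨fun hu => ?_, fun hu => hu ▸ rfl⟩
  obtain ⟨p⟩ := ConnectedComponent.exact hu.symm
  cases p with
  | nil => rfl
  | cons h _ => exact absurd h (hv _)

theorem hcOn_supp [Finite V] (h2 : (Set.range σ).ncard = 2)
    (hproper : ∀ u v, G.Adj u v → σ u ≠ σ v) (hbic : IsBiclusterGraph G)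
    (c : G.ConnectedComponent) : HCOn G σ c.supp := by
  refine c.ind fun v => ?_
  by_cases hiso : ∃ w, G.Adj v w
  · obtain ⟨w, hvw⟩ := hiso
    exact (hbic _).hcOn h2 hproper (Set.toFinite _) rfl
      (ConnectedComponent.connectedComponentMk_eq_of_adj hvw).symm hvw
  · push Not at hiso
    rw [supp_connectedComponentMk_eq_singleton hiso]
    exact .single v

theorem hcOn_setOf_connectedComponentMk_mem_insert
    (hc : ∀ c : G.ConnectedComponent, HCOn G σ c.supp) {D : G.ConnectedComponent}
    (hD : ∀ c : G.ConnectedComponent, σ '' c.supp ⊆ σ '' D.supp)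
    (s : Set G.ConnectedComponent) (hs : s.Finite) :
    HCOn G σ {v | G.connectedComponentMk v ∈ insert D s} := by
  induction s, hs using Set.Finite.induction_on with
  | empty =>
    simp only [insert_empty_eq, Set.mem_singleton_iff]
    exact hc D
  | @insert c s hcs _ ih =>
    by_cases hcD : c = D
    · simpa [hcD] using ih
    have hfresh {u : V} (hu : G.connectedComponentMk u ∈ insert D s) :
        G.connectedComponentMk u ≠ c := by
      rintro rfl
      exact hu.elim hcD hcs
    have hsplit : {v | G.connectedComponentMk v ∈ insert D (insert c s)} =
        {v | G.connectedComponentMk v ∈ insert D s} ∪ c.supp := by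
      ext v
      simp only [Set.mem_insert_iff, Set.mem_ofPred_eq, Set.mem_union,
        ConnectedComponent.mem_supp_iff]
      tauto
    have hDsub : D.supp ⊆ {v | G.connectedComponentMk v ∈ insert D s} :=
      fun _ => .inl
    rw [hsplit]
    refine .union _ _ (D.nonempty_supp.mono hDsub) c.nonempty_supp
      (Set.disjoint_left.mpr fun u hu hu' => hfresh hu hu') (fun u hu v hv huv => ?_)
      (.inr ((hD c).trans (Set.image_mono hDsub))) ih (hc c)
    exact hfresh hu ((ConnectedComponent.connectedComponentMk_eq_of_adj huv).trans hv)

theorem IsBiclusterGraph.isHCCograph [Finite V] (hbic : IsBiclusterGraph G)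
    (h2 : (Set.range σ).ncard = 2) (hproper : ∀ u v, G.Adj u v → σ u ≠ σ v) {a b : V}
    (hab : G.Adj a b) : IsHCCograph G σ := by
  have hD (c : G.ConnectedComponent) : σ '' c.supp ⊆ σ '' (G.connectedComponentMk a).supp := by
    rw [image_eq_range_of_ne (S := (G.connectedComponentMk a).supp) h2 rfl
      (ConnectedComponent.connectedComponentMk_eq_of_adj hab).symm (hproper a b hab)]
    exact Set.image_subset_range σ _
  simpa [IsHCCograph] using hcOn_setOf_connectedComponentMk_mem_insert
    (hcOn_supp h2 hproper hbic) hD Set.univ Set.finite_univ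

/-- `(G, σ)` is a 2-hc-cograph (an hc-cograph using exactly two colors) if and
only if `(G, σ)` is a properly 2-colored bicluster graph containing at least one edge. -/
theorem two_hcCograph_iff_properly_two_colored_bicluster [Fintype V]
    (G : SimpleGraph V) (σ : V → C) :
    (IsHCCograph G σ ∧ (Set.range σ).ncard = 2) ↔
      ((∀ u v : V, G.Adj u v → σ u ≠ σ v) ∧ (Set.range σ).ncard = 2 ∧
        IsBiclusterGraph G ∧ ∃ u v : V, G.Adj u v) := by
  constructor
  · rintro ⟨h, h2⟩
    have hσ : (σ '' Set.univ).Nontrivial := by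
      rw [Set.image_univ]
      exact (Set.one_lt_ncard_iff_nontrivial_and_finite.mp (by omega)).1
    obtain ⟨u, -, v, -, huv⟩ := HCOn.exists_adj_of_nontrivial h hσ
    exact ⟨fun u v => HCOn.ne_of_adj h trivial trivial, h2, h.isBiclusterGraph h2, u, v, huv⟩
  · rintro ⟨hproper, h2, hbic, u, v, huv⟩
    exact ⟨hbic.isHCCograph h2 hproper huv, h2⟩

end RBMGPaper
end

section
/- Let $(G,\sigma)$ be a properly colored graph with a hub-vertex $x$, and let $F$ be a subset of the edge set of $G$ of minimum cardinality such that $(G \setminus F, \sigma)$ is an hc-cograph. Then $F$ contains no edge incident to $x$. -/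
namespace RBMGPaper

variable {V : Type*} {C : Type*}

/-! The hub `x` has a color that no other vertex carries, since `σ` is proper. Deleting such a
vertex from an hc-cograph leaves an hc-cograph, and a vertex of unique color adjacent to all others
can always be joined back. So keeping only the edges of `F` that avoid `x` still yields an
hc-cograph, and minimality of `F` rules out any edge of `F` at `x`. -/

lemma Set.union_induction_of_nonempty {α : Type*} {P : Set α → Prop} {A B : Set α}
    (hne : (A ∪ B).Nonempty) (hA : A.Nonempty → P A) (hB : B.Nonempty → P B)
    (hAB : A.Nonempty → B.Nonempty → P (A ∪ B)) : P (A ∪ B) := by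
  rcases A.eq_empty_or_nonempty with rfl | hA'
  · simpa using hB (by simpa using hne)
  rcases B.eq_empty_or_nonempty with rfl | hB'
  · simpa using hA hA'
  exact hAB hA' hB'

lemma Set.image_sdiff_singleton_of_notMem {α β : Type*} (f : α → β) {S : Set α} {x : α}
    (hx : f x ∉ f '' (S \ {x})) : f '' (S \ {x}) = f '' S \ {f x} := by
  ext c
  constructor
  · rintro ⟨y, hy, rfl⟩
    exact ⟨⟨y, hy.1, rfl⟩, fun h => hx ⟨y, hy, Set.mem_singleton_iff.mp h⟩⟩
  · rintro ⟨⟨y, hyS, rfl⟩, hy⟩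
    exact ⟨y, ⟨hyS, fun h => hy (by rw [Set.mem_singleton_iff.mp h]; rfl)⟩, rfl⟩

namespace HCOn

variable {G G' : SimpleGraph V} {σ : V → C} {S : Set V} {x : V}

lemma nonempty (h : HCOn G σ S) : S.Nonempty := by
  cases h with
  | single v => exact Set.singleton_nonempty v
  | join _ _ hA => exact hA.inl
  | union _ _ hA => exact hA.inl

lemma congr_graph (h : HCOn G σ S) (hagree : ∀ u ∈ S, ∀ v ∈ S, G.Adj u v ↔ G'.Adj u v) :
    HCOn G' σ S := by
  induction h with
  | single v => exact single v
  | join A B hA hB hdisj hadj hcol _ _ ih1 ih2 =>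
    exact join A B hA hB hdisj
      (fun a ha b hb => (hagree a (.inl ha) b (.inr hb)).mp (hadj a ha b hb)) hcol
      (ih1 fun u hu v hv => hagree u (.inl hu) v (.inl hv))
      (ih2 fun u hu v hv => hagree u (.inr hu) v (.inr hv))
  | union A B hA hB hdisj hadj hcol _ _ ih1 ih2 =>
    exact union A B hA hB hdisj
      (fun a ha b hb h' => hadj a ha b hb ((hagree a (.inl ha) b (.inr hb)).mpr h')) hcol
      (ih1 fun u hu v hv => hagree u (.inl hu) v (.inl hv))
      (ih2 fun u hu v hv => hagree u (.inr hu) v (.inr hv))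

/-- The color sets of the two sides of a union lose at most the color of `x`, so they stay
comparable. -/
lemma sdiff_singleton (h : HCOn G σ S) (hx : σ x ∉ σ '' (S \ {x})) (hne : (S \ {x}).Nonempty) :
    HCOn G σ (S \ {x}) := by
  induction h with
  | single v =>
    rw [Set.sdiff_singleton_eq_self fun hv => by simp [Set.mem_singleton_iff.mp hv] at hne]
    exact single v
  | join A B _ _ hdisj hadj hcol _ _ ih1 ih2 =>
    have hxA : σ x ∉ σ '' (A \ {x}) := fun h => hx (Set.image_mono (by gcongr; simp) h)
    have hxB : σ x ∉ σ '' (B \ {x}) := fun h => hx (Set.image_mono (by gcongr; simp) h)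
    rw [Set.union_sdiff_distrib] at hne ⊢
    exact Set.union_induction_of_nonempty hne (ih1 hxA) (ih2 hxB) fun hA' hB' =>
      join _ _ hA' hB' (hdisj.mono Set.sdiff_subset Set.sdiff_subset)
        (fun a ha b hb => hadj a ha.1 b hb.1)
        (hcol.mono (Set.image_mono Set.sdiff_subset) (Set.image_mono Set.sdiff_subset))
        (ih1 hxA hA') (ih2 hxB hB')
  | union A B _ _ hdisj hadj hcol _ _ ih1 ih2 =>
    have hxA : σ x ∉ σ '' (A \ {x}) := fun h => hx (Set.image_mono (by gcongr; simp) h)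
    have hxB : σ x ∉ σ '' (B \ {x}) := fun h => hx (Set.image_mono (by gcongr; simp) h)
    rw [Set.union_sdiff_distrib] at hne ⊢
    refine Set.union_induction_of_nonempty hne (ih1 hxA) (ih2 hxB) fun hA' hB' =>
      union _ _ hA' hB' (hdisj.mono Set.sdiff_subset Set.sdiff_subset)
        (fun a ha b hb => hadj a ha.1 b hb.1) ?_ (ih1 hxA hA') (ih2 hxB hB')
    rw [Set.image_sdiff_singleton_of_notMem σ hxA, Set.image_sdiff_singleton_of_notMem σ hxB]
    exact hcol.imp Set.sdiff_subset_sdiff_left Set.sdiff_subset_sdiff_left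

lemma insert_hub (h : HCOn G σ S) (hxS : x ∉ S) (hhub : ∀ v ∈ S, G.Adj x v)
    (hx : σ x ∉ σ '' S) : HCOn G σ (insert x S) :=
  join {x} S (Set.singleton_nonempty x) h.nonempty (Set.disjoint_singleton_left.mpr hxS)
    (fun a ha b hb => by rw [Set.mem_singleton_iff.mp ha]; exact hhub b hb)
    (by rwa [Set.image_singleton, Set.disjoint_singleton_left]) (single x) h

end HCOn

lemma deleteEdges_sep_notMem_adj_iff {G : SimpleGraph V} {F : Set (Sym2 V)} {x u v : V}
    (hu : u ≠ x) (hv : v ≠ x) :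
    (G.deleteEdges {f ∈ F | x ∉ f}).Adj u v ↔ (G.deleteEdges F).Adj u v := by
  simp [hu.symm, hv.symm]

lemma isHCCograph_deleteEdges_sep_notMem_hub {G : SimpleGraph V} {σ : V → C} {x : V}
    {F : Set (Sym2 V)} (hhub : ∀ v, v ≠ x → G.Adj x v) (hx : ∀ v, v ≠ x → σ v ≠ σ x)
    (hF : IsHCCograph (G.deleteEdges F) σ) :
    IsHCCograph (G.deleteEdges {f ∈ F | x ∉ f}) σ := by
  rcases ({x}ᶜ : Set V).eq_empty_or_nonempty with hV | hne
  · rw [IsHCCograph, ← Set.compl_empty_iff.mp hV]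
    exact HCOn.single x
  have hσ : σ x ∉ σ '' {x}ᶜ := fun ⟨v, hv, h⟩ => hx v hv h
  have hrest : HCOn (G.deleteEdges F) σ {x}ᶜ := by
    rw [Set.compl_eq_univ_sdiff] at hσ hne ⊢
    exact hF.sdiff_singleton hσ hne
  have hjoin := (hrest.congr_graph fun u hu v hv =>
      (deleteEdges_sep_notMem_adj_iff hu hv).symm).insert_hub (Set.notMem_compl_iff.mpr rfl)
    (fun v hv => by simpa using hhub v hv) hσ
  rwa [Set.insert_eq, Set.union_compl_self] at hjoin

/-- Let `(G, σ)` be a properly colored graph with a hub-vertex `x`, and let `F`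
be a minimum-cardinality subset of the edge set of `G` such that `(G \ F, σ)` is an hc-cograph.
Then `F` contains no edge incident to `x`. -/
theorem optimal_hc_deletion_avoids_hub [Fintype V] (G : SimpleGraph V) (σ : V → C) (x : V)
    (hprop : ∀ u v : V, G.Adj u v → σ u ≠ σ v)
    (hhub : ∀ v : V, v ≠ x → G.Adj x v)
    (F : Set (Sym2 V)) (hFsub : F ⊆ G.edgeSet)
    (hF : IsHCCograph (G.deleteEdges F) σ)
    (hmin : ∀ F' ⊆ G.edgeSet, IsHCCograph (G.deleteEdges F') σ →
      F.ncard ≤ F'.ncard) :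
    ∀ e ∈ F, x ∉ e := by
  intro e heF hxe
  have hx : ∀ v, v ≠ x → σ v ≠ σ x := fun v hv => (hprop x v (hhub v hv)).symm
  have hssub : {f ∈ F | x ∉ f} ⊂ F := ⟨Set.sep_subset _ _, fun h => (h heF).2 hxe⟩
  exact (Set.ncard_lt_ncard hssub).not_ge <| hmin _ ((Set.sep_subset _ _).trans hFsub)
    (isHCCograph_deleteEdges_sep_notMem_hub hhub hx hF)

end RBMGPaper
end
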